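/- Under the randomization assumption and with coarsened factor X̃ = c(X), the generalized null hypothesis H̃₀ is equivalent to the conditional independence Ỹ ⊥ X̃ | (h(X̃), Z), where Ỹ = Y is the observed outcome. -/

import Mathlib

open Finset

open Classical in
/-- Probability of an event `S` under the weight function `p` on a finite sample space. -/
noncomputable def Pr {Ω : Type*} [Fintype Ω] (p : Ω → ℝ) (S : Ω → Prop) : ℝ :=
  ∑ ω, if S ω then p ω else 0

/-!
Under randomization, `Pr (X = x, Z = z, Y(x,z) = t) = Pr (X = x, Z = z) · Pr (Y(x,z) = t)`, so
the mixture law `L x̃ z` is exactly the observed conditional law of `Y` given `c X = x̃, Z = z`.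
The null hypothesis thus says that this conditional law depends on `c X` only through
`h (c X)`. The conditional law given `h (c X) = u, Z = z` is the mixture of the laws given
`c X = x̃, Z = z` over the fibre `h x̃ = u`, weighted by `Pr (c X = x̃, Z = z)`, and such a mixture
equals each of its components of positive weight exactly when all those components agree;
cross-multiplied, this is the product formula of conditional independence.
-/

section Pr

variable {Ω : Type*} [Fintype Ω] {p : Ω → ℝ}

theorem Pr_congr {S T : Ω → Prop} (hST : ∀ ω, S ω ↔ T ω) : Pr p S = Pr p T := by
  rw [funext fun ω => propext (hST ω)]

theorem Pr_eq_zero {S : Ω → Prop} (hS : ∀ ω, ¬ S ω) : Pr p S = 0 :=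
  sum_eq_zero fun ω _ => if_neg (hS ω)

theorem Pr_mono (hp : ∀ ω, 0 ≤ p ω) {S T : Ω → Prop} (hST : ∀ ω, S ω → T ω) :
    Pr p S ≤ Pr p T := by
  classical
  refine sum_le_sum fun ω _ => ?_
  split_ifs with hS hT hT
  exacts [le_rfl, absurd (hST ω hS) hT, hp ω, le_rfl]

theorem Pr_nonneg (hp : ∀ ω, 0 ≤ p ω) (S : Ω → Prop) : 0 ≤ Pr p S :=
  sum_nonneg fun ω _ => by split_ifs; exacts [hp ω, le_rfl]

theorem Pr_eq_sum_and {κ : Type*} (K : Ω → κ) (T : Finset κ) (hT : ∀ ω, K ω ∈ T)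
    (S : Ω → Prop) : Pr p S = ∑ k ∈ T, Pr p (fun ω => K ω = k ∧ S ω) := by
  classical
  unfold Pr
  rw [sum_comm]
  refine sum_congr rfl fun ω _ => ?_
  by_cases hS : S ω <;> simp [hS, hT ω]

theorem Pr_eq_and_comp_and {κ : Type*} (K : Ω → κ) (k : κ) (P : κ → Prop) [DecidablePred P]
    (S : Ω → Prop) :
    Pr p (fun ω => K ω = k ∧ P (K ω) ∧ S ω) = if P k then Pr p (fun ω => K ω = k ∧ S ω) else 0 := by
  split_ifs with hk
  · exact Pr_congr fun ω => ⟨fun h => ⟨h.1, h.2.2⟩, fun h => ⟨h.1, h.1 ▸ hk, h.2⟩⟩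
  · exact Pr_eq_zero fun ω h => hk (h.1 ▸ h.2.1)

theorem Pr_comp_and_eq_sum {κ : Type*} (K : Ω → κ) (T : Finset κ) (hT : ∀ ω, K ω ∈ T)
    (P : κ → Prop) [DecidablePred P] (S : Ω → Prop) :
    Pr p (fun ω => P (K ω) ∧ S ω) = ∑ k ∈ T, if P k then Pr p (fun ω => K ω = k ∧ S ω) else 0 := by
  rw [Pr_eq_sum_and K T hT]
  exact sum_congr rfl fun k _ => Pr_eq_and_comp_and K k P S

theorem Pr_and_comp_eq_mul {β γ : Type*} (A : Ω → Prop) (G : Ω → β)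
    (hind : ∀ g, Pr p (fun ω => A ω ∧ G ω = g) = Pr p A * Pr p (fun ω => G ω = g))
    (f : β → γ) (t : γ) :
    Pr p (fun ω => A ω ∧ f (G ω) = t) = Pr p A * Pr p (fun ω => f (G ω) = t) := by
  classical
  have hsplit : ∀ S : Ω → Prop, Pr p (fun ω => f (G ω) = t ∧ S ω)
      = ∑ g ∈ univ.image G, if f g = t then Pr p (fun ω => G ω = g ∧ S ω) else 0 :=
    Pr_comp_and_eq_sum G _ (fun ω => mem_image_of_mem G (mem_univ ω)) (f · = t)
  calc Pr p (fun ω => A ω ∧ f (G ω) = t) = Pr p (fun ω => f (G ω) = t ∧ A ω) :=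
        Pr_congr fun _ => and_comm
    _ = Pr p A * Pr p (fun ω => f (G ω) = t ∧ True) := by
        rw [hsplit, hsplit, mul_sum]
        refine sum_congr rfl fun g _ => ?_
        split_ifs
        · rw [Pr_congr fun _ => and_comm, hind]
          simp only [and_true]
        · rw [mul_zero]
    _ = Pr p A * Pr p (fun ω => f (G ω) = t) := by simp only [and_true]

end Pr

theorem mul_sum_eq_sum_mul_of_cross {ι : Type*} {s : Finset ι} {n d : ι → ℝ} {i : ι}
    (h : ∀ j ∈ s, n i * d j = n j * d i) : n i * ∑ j ∈ s, d j = (∑ j ∈ s, n j) * d i := by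
  rw [mul_sum, sum_mul]
  exact sum_congr rfl h

theorem div_eq_div_mul_div_iff {a b e D : ℝ} (hD : D ≠ 0) :
    a / D = b / D * (e / D) ↔ a * D = b * e := by
  rw [div_mul_div_comm, div_eq_div_iff hD (mul_ne_zero hD hD), ← mul_assoc, mul_left_inj' hD]

theorem mul_eq_mul_of_le_of_div_eq_div {a b c d : ℝ} (ha : 0 ≤ a) (hab : a ≤ b) (hc : 0 ≤ c)
    (hcd : c ≤ d) (h : 0 < b → 0 < d → a / b = c / d) : a * d = c * b := by
  rcases (ha.trans hab).eq_or_lt with hb | hb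
  · rw [le_antisymm (hb ▸ hab) ha, ← hb, zero_mul, mul_zero]
  rcases (hc.trans hcd).eq_or_lt with hd | hd
  · rw [le_antisymm (hd ▸ hcd) hc, ← hd, zero_mul, mul_zero]
  exact (div_eq_div_iff hb.ne' hd.ne').mp (h hb hd)

section CondIndep

variable {Ω α κ β γ : Type*} [Fintype Ω] {p : Ω → ℝ}

/-- `Pr (V = · | K = k, W = w)` depends on `k` only through `g k`. -/
def CondLawFactorsThrough (p : Ω → ℝ) (V : Ω → α) (K : Ω → κ) (g : κ → β) (W : Ω → γ) :
    Prop :=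
  ∀ (k k' : κ) (w : γ), g k = g k' →
    0 < Pr p (fun ω => K ω = k ∧ W ω = w) → 0 < Pr p (fun ω => K ω = k' ∧ W ω = w) →
    ∀ t : α, Pr p (fun ω => V ω = t ∧ K ω = k ∧ W ω = w) / Pr p (fun ω => K ω = k ∧ W ω = w)
      = Pr p (fun ω => V ω = t ∧ K ω = k' ∧ W ω = w) / Pr p (fun ω => K ω = k' ∧ W ω = w)

/-- `V ⊥ K | (g K, W)`, on the atoms of `(g K, W)` of positive probability. -/
def CondIndepGivenComp (p : Ω → ℝ) (V : Ω → α) (K : Ω → κ) (g : κ → β) (W : Ω → γ) : Prop :=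
  ∀ (t : α) (k : κ) (u : β) (w : γ), 0 < Pr p (fun ω => g (K ω) = u ∧ W ω = w) →
    Pr p (fun ω => V ω = t ∧ K ω = k ∧ g (K ω) = u ∧ W ω = w)
        / Pr p (fun ω => g (K ω) = u ∧ W ω = w)
      = (Pr p (fun ω => V ω = t ∧ g (K ω) = u ∧ W ω = w)
          / Pr p (fun ω => g (K ω) = u ∧ W ω = w))
        * (Pr p (fun ω => K ω = k ∧ g (K ω) = u ∧ W ω = w)
          / Pr p (fun ω => g (K ω) = u ∧ W ω = w))

variable {V : Ω → α} {K : Ω → κ} {g : κ → β} {W : Ω → γ}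

theorem Pr_and_comp_eq_ite [DecidableEq β] (A : Ω → Prop) (k : κ) (u : β) (S : Ω → Prop) :
    Pr p (fun ω => A ω ∧ K ω = k ∧ g (K ω) = u ∧ S ω)
      = if g k = u then Pr p (fun ω => A ω ∧ K ω = k ∧ S ω) else 0 := by
  split_ifs with hk
  · exact Pr_congr fun ω =>
      ⟨fun h => ⟨h.1, h.2.1, h.2.2.2⟩, fun h => ⟨h.1, h.2.1, h.2.1 ▸ hk, h.2.2⟩⟩
  · exact Pr_eq_zero fun ω h => hk (h.2.1 ▸ h.2.2.1)

theorem CondLawFactorsThrough.condIndepGivenComp (hp : ∀ ω, 0 ≤ p ω)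
    (H : CondLawFactorsThrough p V K g W) : CondIndepGivenComp p V K g W := by
  classical
  intro t k u w hD
  have hK : ∀ ω, K ω ∈ univ.image K := fun ω => mem_image_of_mem K (mem_univ ω)
  set e := fun j => Pr p (fun ω => K ω = j ∧ g (K ω) = u ∧ W ω = w) with he
  set a := fun j => Pr p (fun ω => V ω = t ∧ K ω = j ∧ g (K ω) = u ∧ W ω = w) with ha
  have hDsum : Pr p (fun ω => g (K ω) = u ∧ W ω = w) = ∑ j ∈ univ.image K, e j :=
    Pr_eq_sum_and K _ hK _
  have hMsum : Pr p (fun ω => V ω = t ∧ g (K ω) = u ∧ W ω = w) = ∑ j ∈ univ.image K, a j := by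
    rw [Pr_eq_sum_and K _ hK]
    exact sum_congr rfl fun j _ => Pr_congr fun ω => and_left_comm
  have hfiber : ∀ j, 0 < e j → g j = u ∧ e j = Pr p (fun ω => K ω = j ∧ W ω = w)
      ∧ a j = Pr p (fun ω => V ω = t ∧ K ω = j ∧ W ω = w) := by
    intro j hj
    simp only [he, ha, Pr_eq_and_comp_and K j (g · = u), Pr_and_comp_eq_ite] at hj ⊢
    split_ifs at hj ⊢ with hgj
    exacts [⟨hgj, rfl, rfl⟩, (lt_irrefl 0 hj).elim]
  have hae : ∀ j, 0 ≤ a j ∧ a j ≤ e j := fun j => ⟨Pr_nonneg hp _, Pr_mono hp fun ω h => h.2⟩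
  rw [div_eq_div_mul_div_iff hD.ne', hDsum, hMsum]
  refine mul_sum_eq_sum_mul_of_cross fun j _ =>
    mul_eq_mul_of_le_of_div_eq_div (hae k).1 (hae k).2 (hae j).1 (hae j).2 fun hk hj => ?_
  obtain ⟨hgk, hek, hak⟩ := hfiber k hk
  obtain ⟨hgj, hej, haj⟩ := hfiber j hj
  rw [hek, hak, hej, haj]
  exact H k j w (hgk.trans hgj.symm) (hek ▸ hk) (hej ▸ hj) t

theorem CondIndepGivenComp.condLawFactorsThrough (hp : ∀ ω, 0 ≤ p ω)
    (H : CondIndepGivenComp p V K g W) : CondLawFactorsThrough p V K g W := by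
  classical
  intro k k' w hkk' hk hk' t
  have hD : 0 < Pr p (fun ω => g (K ω) = g k ∧ W ω = w) :=
    hk.trans_le (Pr_mono hp fun ω h => ⟨h.1 ▸ rfl, h.2⟩)
  have hratio : ∀ j, g j = g k → 0 < Pr p (fun ω => K ω = j ∧ W ω = w) →
      Pr p (fun ω => V ω = t ∧ K ω = j ∧ W ω = w) / Pr p (fun ω => K ω = j ∧ W ω = w)
        = Pr p (fun ω => V ω = t ∧ g (K ω) = g k ∧ W ω = w)
          / Pr p (fun ω => g (K ω) = g k ∧ W ω = w) := by
    intro j hj hpos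
    have hCI := H t j (g k) w hD
    rw [Pr_and_comp_eq_ite, Pr_eq_and_comp_and K j (g · = g k), if_pos hj, if_pos hj,
      div_eq_div_mul_div_iff hD.ne'] at hCI
    exact (div_eq_div_iff hpos.ne' hD.ne').mpr hCI
  rw [hratio k rfl hk, hratio k' hkk'.symm hk']

theorem condLawFactorsThrough_iff_condIndepGivenComp (hp : ∀ ω, 0 ≤ p ω) :
    CondLawFactorsThrough p V K g W ↔ CondIndepGivenComp p V K g W :=
  ⟨fun H => H.condIndepGivenComp hp, fun H => H.condLawFactorsThrough hp⟩

end CondIndep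

section PotentialOutcomes

variable {Ω 𝒳 𝒵 𝒳t : Type*} [Fintype Ω] {p : Ω → ℝ}
  {X : Ω → 𝒳} {Z : Ω → 𝒵} {Y0 : 𝒳 → 𝒵 → Ω → ℝ} {Y : Ω → ℝ}

/-- `(X, Z)` is independent of the whole family of potential outcomes `Y0`. -/
def Randomized (p : Ω → ℝ) (X : Ω → 𝒳) (Z : Ω → 𝒵) (Y0 : 𝒳 → 𝒵 → Ω → ℝ) : Prop :=
  ∀ (x : 𝒳) (z : 𝒵) (g : 𝒳 → 𝒵 → ℝ),
    Pr p (fun ω => X ω = x ∧ Z ω = z ∧ ∀ a b, Y0 a b ω = g a b)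
      = Pr p (fun ω => X ω = x ∧ Z ω = z) * Pr p (fun ω => ∀ a b, Y0 a b ω = g a b)

theorem Pr_and_potentialOutcome_eq_mul (hrand : Randomized p X Z Y0) (x : 𝒳) (z : 𝒵) (t : ℝ) :
    Pr p (fun ω => X ω = x ∧ Z ω = z ∧ Y0 x z ω = t)
      = Pr p (fun ω => X ω = x ∧ Z ω = z) * Pr p (fun ω => Y0 x z ω = t) := by
  have := Pr_and_comp_eq_mul (fun ω => X ω = x ∧ Z ω = z) (fun ω a b => Y0 a b ω)
    (fun g => by simpa only [funext_iff, and_assoc] using hrand x z g) (fun g => g x z) t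
  simpa only [and_assoc] using this

theorem Pr_outcome_and_comp_eq_sum [Fintype 𝒳] [DecidableEq 𝒳t]
    (hY : ∀ ω, Y ω = Y0 (X ω) (Z ω) ω) (hrand : Randomized p X Z Y0)
    (c : 𝒳 → 𝒳t) (xt : 𝒳t) (z : 𝒵) (t : ℝ) :
    Pr p (fun ω => Y ω = t ∧ c (X ω) = xt ∧ Z ω = z)
      = ∑ x : 𝒳, if c x = xt
          then Pr p (fun ω => X ω = x ∧ Z ω = z) * Pr p (fun ω => Y0 x z ω = t) else 0 := by
  have hobs : ∀ x, Pr p (fun ω => X ω = x ∧ Z ω = z ∧ Y ω = t)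
      = Pr p (fun ω => X ω = x ∧ Z ω = z ∧ Y0 x z ω = t) := fun x =>
    Pr_congr fun ω => and_congr_right fun hx => and_congr_right fun hz => by rw [hY, hx, hz]
  rw [Pr_congr fun ω => and_rotate, Pr_comp_and_eq_sum X univ (fun _ => mem_univ _) (c · = xt)]
  simp only [hobs, Pr_and_potentialOutcome_eq_mul hrand]

end PotentialOutcomes

theorem stmt11_general {Ω 𝒳 𝒵 𝒳t 𝒳bar : Type*} [Fintype Ω] [Fintype 𝒳]
    [DecidableEq 𝒳t]
    (p : Ω → ℝ) (hp : ∀ ω, 0 ≤ p ω)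
    (X : Ω → 𝒳) (Z : Ω → 𝒵) (Y0 : 𝒳 → 𝒵 → Ω → ℝ)
    (Y : Ω → ℝ) (hY : ∀ ω, Y ω = Y0 (X ω) (Z ω) ω)
    (c : 𝒳 → 𝒳t) (h : 𝒳t → 𝒳bar)
    -- randomization: (X,Z) is independent of the family of potential outcomes
    (hrand : ∀ (x : 𝒳) (z : 𝒵) (g : 𝒳 → 𝒵 → ℝ),
      Pr p (fun ω => X ω = x ∧ Z ω = z ∧ ∀ a b, Y0 a b ω = g a b)
        = Pr p (fun ω => X ω = x ∧ Z ω = z) * Pr p (fun ω => ∀ a b, Y0 a b ω = g a b))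
    -- total conditional weight of the fiber c⁻¹(xt) given Z = z (up to the factor P(Z=z))
    (denom : 𝒳t → 𝒵 → ℝ)
    (hdenom : ∀ xt z, denom xt z
      = ∑ x : 𝒳, if c x = xt then Pr p (fun ω => X ω = x ∧ Z ω = z) else 0)
    -- law of the marginalized potential outcome Ỹ(xt, z): mixture of the laws of the
    -- Y(x,z) over the fiber c⁻¹(xt), weighted proportionally to P(X = x | Z = z)
    (L : 𝒳t → 𝒵 → ℝ → ℝ)
    (hL : ∀ xt z t, L xt z t
      = (∑ x : 𝒳, if c x = xt
          then Pr p (fun ω => X ω = x ∧ Z ω = z) * Pr p (fun ω => Y0 x z ω = t) else 0)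
        / denom xt z) :
    -- generalized H̃₀ ↔ Ỹ ⊥ X̃ | (h(X̃), Z)
    ((∀ (xt xt' : 𝒳t) (z : 𝒵), h xt = h xt' →
        0 < denom xt z → 0 < denom xt' z →
        ∀ t : ℝ, L xt z t = L xt' z t)
      ↔ (∀ (t : ℝ) (xt : 𝒳t) (u : 𝒳bar) (z : 𝒵),
          0 < Pr p (fun ω => h (c (X ω)) = u ∧ Z ω = z) →
          Pr p (fun ω => Y ω = t ∧ c (X ω) = xt ∧ h (c (X ω)) = u ∧ Z ω = z)
              / Pr p (fun ω => h (c (X ω)) = u ∧ Z ω = z)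
            = (Pr p (fun ω => Y ω = t ∧ h (c (X ω)) = u ∧ Z ω = z)
                / Pr p (fun ω => h (c (X ω)) = u ∧ Z ω = z))
              * (Pr p (fun ω => c (X ω) = xt ∧ h (c (X ω)) = u ∧ Z ω = z)
                / Pr p (fun ω => h (c (X ω)) = u ∧ Z ω = z)))) := by
  have hden : ∀ xt z, denom xt z = Pr p (fun ω => c (X ω) = xt ∧ Z ω = z) := fun xt z =>
    (hdenom xt z).trans (Pr_comp_and_eq_sum X univ (fun _ => mem_univ _) (c · = xt) _).symm
  have hLobs : ∀ xt z t, L xt z t = Pr p (fun ω => Y ω = t ∧ c (X ω) = xt ∧ Z ω = z)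
      / Pr p (fun ω => c (X ω) = xt ∧ Z ω = z) := fun xt z t => by
    rw [hL, hden, Pr_outcome_and_comp_eq_sum hY hrand]
  simp only [hLobs, hden]
  exact condLawFactorsThrough_iff_condIndepGivenComp (V := Y) (K := fun ω => c (X ω)) (g := h)
    (W := Z) hp

theorem stmt11 {Ω 𝒳 𝒵 𝒳t 𝒳bar : Type*} [Fintype Ω] [Fintype 𝒳] [Fintype 𝒵]
    [DecidableEq 𝒳t]
    (p : Ω → ℝ) (hp : ∀ ω, 0 ≤ p ω) (hp1 : ∑ ω, p ω = 1)
    (X : Ω → 𝒳) (Z : Ω → 𝒵) (Y0 : 𝒳 → 𝒵 → Ω → ℝ)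
    (Y : Ω → ℝ) (hY : ∀ ω, Y ω = Y0 (X ω) (Z ω) ω)
    (c : 𝒳 → 𝒳t) (h : 𝒳t → 𝒳bar)
    -- randomization: (X,Z) is independent of the family of potential outcomes
    (hrand : ∀ (x : 𝒳) (z : 𝒵) (g : 𝒳 → 𝒵 → ℝ),
      Pr p (fun ω => X ω = x ∧ Z ω = z ∧ ∀ a b, Y0 a b ω = g a b)
        = Pr p (fun ω => X ω = x ∧ Z ω = z) * Pr p (fun ω => ∀ a b, Y0 a b ω = g a b))
    -- total conditional weight of the fiber c⁻¹(xt) given Z = z (up to the factor P(Z=z))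
    (denom : 𝒳t → 𝒵 → ℝ)
    (hdenom : ∀ xt z, denom xt z
      = ∑ x : 𝒳, if c x = xt then Pr p (fun ω => X ω = x ∧ Z ω = z) else 0)
    -- law of the marginalized potential outcome Ỹ(xt, z): mixture of the laws of the
    -- Y(x,z) over the fiber c⁻¹(xt), weighted proportionally to P(X = x | Z = z)
    (L : 𝒳t → 𝒵 → ℝ → ℝ)
    (hL : ∀ xt z t, L xt z t
      = (∑ x : 𝒳, if c x = xt
          then Pr p (fun ω => X ω = x ∧ Z ω = z) * Pr p (fun ω => Y0 x z ω = t) else 0)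
        / denom xt z) :
    -- generalized H̃₀ ↔ Ỹ ⊥ X̃ | (h(X̃), Z)
    ((∀ (xt xt' : 𝒳t) (z : 𝒵), h xt = h xt' →
        0 < denom xt z → 0 < denom xt' z →
        ∀ t : ℝ, L xt z t = L xt' z t)
      ↔ (∀ (t : ℝ) (xt : 𝒳t) (u : 𝒳bar) (z : 𝒵),
          0 < Pr p (fun ω => h (c (X ω)) = u ∧ Z ω = z) →
          Pr p (fun ω => Y ω = t ∧ c (X ω) = xt ∧ h (c (X ω)) = u ∧ Z ω = z)
              / Pr p (fun ω => h (c (X ω)) = u ∧ Z ω = z)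
            = (Pr p (fun ω => Y ω = t ∧ h (c (X ω)) = u ∧ Z ω = z)
                / Pr p (fun ω => h (c (X ω)) = u ∧ Z ω = z))
              * (Pr p (fun ω => c (X ω) = xt ∧ h (c (X ω)) = u ∧ Z ω = z)
                / Pr p (fun ω => h (c (X ω)) = u ∧ Z ω = z)))) :=
  stmt11_general p hp X Z Y0 Y hY c h hrand denom hdenom L hL
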